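/- For a fixed vector g ∈ R^n and B = [z₁,...,z_k] with columns i.i.d. N(0, I_n), E[‖BBᵀg‖²] = k(n+k+1)·‖g‖². -/

import Mathlib

/-!
Write `(BBᵀg)_a = ∑ᵢ F_a(zᵢ)` with `F_a(x) = x_a ⟨x, g⟩`. For i.i.d. columns
`E[(∑ᵢ F(zᵢ))²] = k E[F²] + k(k-1) (E F)²`, and the Gaussian moments `E x² = 1`, `E x⁴ = 3`
(from Gaussian integration by parts) give `E F_a = g_a` and `E F_a² = ‖g‖² + 2 g_a²`.
Summing over `a`: `k(n+2)‖g‖² + k(k-1)‖g‖² = k(n+k+1)‖g‖²`.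
-/

open MeasureTheory ProbabilityTheory Matrix

/-- The standard Gaussian measure `N(0, I_n)` on `ℝⁿ`. -/
noncomputable def stdGaussian (n : ℕ) : Measure (Fin n → ℝ) :=
  Measure.pi fun _ => gaussianReal 0 1

/-- The law of `k` i.i.d. `N(0, I_n)` vectors `z₁, …, z_k`. -/
noncomputable def stdGaussianVecs (k n : ℕ) : Measure (Fin k → Fin n → ℝ) :=
  Measure.pi fun _ => stdGaussian n

/-- The `n × k` matrix `B = [z₁, …, z_k]` whose columns are the vectors `z i`. -/
def basisMat {k n : ℕ} (z : Fin k → Fin n → ℝ) : Matrix (Fin n) (Fin k) ℝ :=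
  Matrix.of fun a i => z i a

open Finset
open scoped NNReal

namespace ProbabilityTheory

lemma integrable_pow_gaussianReal (μ : ℝ) (v : ℝ≥0) (m : ℕ) :
    Integrable (fun x => x ^ m) (gaussianReal μ v) :=
  integrable_pow_of_mem_interior_integrableExpSet
    (by simp [integrableExpSet_fun_id_gaussianReal]) m

lemma integrable_gaussianPDFReal_mul_pow (μ : ℝ) (v : ℝ≥0) (m : ℕ) :
    Integrable fun x => gaussianPDFReal μ v x * x ^ m := by
  rcases eq_or_ne v 0 with rfl | hv
  · simp
  have h := integrable_pow_gaussianReal μ v m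
  rw [gaussianReal_of_var_ne_zero μ hv, integrable_withDensity_iff_integrable_smul'
    (measurable_gaussianPDF μ v) (ae_of_all _ fun _ => gaussianPDF_lt_top)] at h
  simpa [toReal_gaussianPDF] using h

lemma hasDerivAt_gaussianPDFReal (μ : ℝ) (v : ℝ≥0) (x : ℝ) :
    HasDerivAt (gaussianPDFReal μ v) (-((x - μ) / v) * gaussianPDFReal μ v x) x := by
  have h : HasDerivAt (fun x => -(x - μ) ^ 2 / (2 * v)) (-((x - μ) / v)) x := by
    refine ((((hasDerivAt_id x).sub_const μ).pow 2).neg.div_const _).congr_deriv ?_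
    rcases eq_or_ne (v : ℝ) 0 with hv | hv
    · simp [hv]
    · field_simp
      simp
  rw [gaussianPDFReal_def]
  exact (h.exp.const_mul _).congr_deriv (by ring)

lemma integral_pow_add_two_gaussianReal (v : ℝ≥0) (m : ℕ) :
    ∫ x, x ^ (m + 2) ∂gaussianReal 0 v = v * (m + 1) * ∫ x, x ^ m ∂gaussianReal 0 v := by
  rcases eq_or_ne v 0 with rfl | hv
  · simp
  simp only [integral_gaussianReal_eq_integral_smul hv, smul_eq_mul]
  have hderiv : ∀ x, HasDerivAt (fun x => x ^ (m + 1) * gaussianPDFReal 0 v x)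
      ((m + 1) * (gaussianPDFReal 0 v x * x ^ m)
        - (v : ℝ)⁻¹ * (gaussianPDFReal 0 v x * x ^ (m + 2))) x := fun x =>
    ((hasDerivAt_pow (m + 1) x).mul (hasDerivAt_gaussianPDFReal 0 v x)).congr_deriv
      (by push_cast; ring)
  have hint := integrable_gaussianPDFReal_mul_pow 0 v
  have h := integral_eq_zero_of_hasDerivAt_of_integrable hderiv
    (((hint m).const_mul _).sub ((hint (m + 2)).const_mul _))
    (by simpa only [mul_comm] using hint (m + 1))
  rw [integral_sub ((hint m).const_mul _) ((hint (m + 2)).const_mul _), integral_const_mul,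
    integral_const_mul, sub_eq_zero] at h
  have hv' : (v : ℝ) ≠ 0 := by exact_mod_cast hv
  field_simp at h
  linear_combination -h

lemma integral_sq_gaussianReal (v : ℝ≥0) : ∫ x, x ^ 2 ∂gaussianReal 0 v = v := by
  simpa using integral_pow_add_two_gaussianReal v 0

lemma integral_pow_four_gaussianReal (v : ℝ≥0) :
    ∫ x, x ^ 4 ∂gaussianReal 0 v = 3 * v ^ 2 := by
  rw [integral_pow_add_two_gaussianReal v 2, integral_sq_gaussianReal]
  ring

end ProbabilityTheory

lemma Fintype.sum_sum_ite_eq {ι : Type*} [Fintype ι] [DecidableEq ι] (a b : ℝ) :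
    ∑ i : ι, ∑ j : ι, (if i = j then a else b)
      = Fintype.card ι * a + ((Fintype.card ι : ℝ) ^ 2 - Fintype.card ι) * b := by
  have h : ∀ i j : ι, (if i = j then a else b) = b + if i = j then a - b else 0 := by
    intro i j
    split_ifs <;> ring
  simp only [h, sum_add_distrib, sum_ite_eq, sum_const, card_univ, nsmul_eq_mul]
  ring

namespace MeasureTheory

section Pi

variable {ι E : Type*} [Fintype ι] [DecidableEq ι]

lemma mul_comp_eval_eq_prod (f g : E → ℝ) (i j : ι) (x : ι → E) :
    f (x i) * g (x j) =
      ∏ l, (if i = l then f (x l) else 1) * (if j = l then g (x l) else 1) := by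
  rw [prod_mul_distrib, prod_ite_eq, prod_ite_eq]
  simp

variable [MeasurableSpace E] {μ : Measure E} [IsProbabilityMeasure μ]

lemma integral_mul_comp_eval_pi (f g : E → ℝ) (i j : ι) :
    ∫ x, f (x i) * g (x j) ∂Measure.pi (fun _ => μ)
      = if i = j then ∫ y, f y * g y ∂μ else (∫ y, f y ∂μ) * ∫ y, g y ∂μ := by
  simp_rw [mul_comp_eval_eq_prod f g i j]
  rw [integral_fintype_prod_eq_prod
    (fun l y => (if i = l then f y else 1) * (if j = l then g y else 1))]
  split_ifs with hij
  · subst hij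
    rw [Fintype.prod_eq_single i fun l hl => by simp [Ne.symm hl]]
    simp
  · rw [Fintype.prod_eq_mul i j hij fun l hl => by simp [Ne.symm hl.1, Ne.symm hl.2]]
    simp [hij, Ne.symm hij]

lemma integrable_mul_comp_eval_pi {f g : E → ℝ} (hf : Integrable f μ) (hg : Integrable g μ)
    (hfg : Integrable (fun y => f y * g y) μ) (i j : ι) :
    Integrable (fun x => f (x i) * g (x j)) (Measure.pi fun _ => μ) := by
  simp_rw [mul_comp_eval_eq_prod f g i j]
  refine Integrable.fintype_prod
    (f := fun l y => (if i = l then f y else 1) * (if j = l then g y else 1)) fun l => ?_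
  by_cases hi : i = l <;> by_cases hj : j = l <;> simp [hi, hj, hf, hg, hfg]

omit [DecidableEq ι] in
lemma integrable_sq_sum_comp_eval_pi {F : E → ℝ} (hF : Integrable F μ)
    (hF2 : Integrable (fun y => F y ^ 2) μ) :
    Integrable (fun x : ι → E => (∑ i, F (x i)) ^ 2) (Measure.pi fun _ => μ) := by
  classical
  have hFF : Integrable (fun y => F y * F y) μ := by simpa only [sq] using hF2
  simp_rw [sq, sum_mul_sum]
  exact integrable_finsetSum _ fun i _ => integrable_finsetSum _ fun j _ =>
    integrable_mul_comp_eval_pi hF hF hFF i j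

omit [DecidableEq ι] in
lemma integral_sq_sum_comp_eval_pi {F : E → ℝ} (hF : Integrable F μ)
    (hF2 : Integrable (fun y => F y ^ 2) μ) :
    ∫ x : ι → E, (∑ i, F (x i)) ^ 2 ∂Measure.pi (fun _ => μ)
      = Fintype.card ι * ∫ y, F y ^ 2 ∂μ
        + ((Fintype.card ι : ℝ) ^ 2 - Fintype.card ι) * (∫ y, F y ∂μ) ^ 2 := by
  classical
  have hFF : Integrable (fun y => F y * F y) μ := by simpa only [sq] using hF2
  simp_rw [sq, sum_mul_sum]
  rw [integral_finsetSum _ fun i _ => integrable_finsetSum _ fun j _ =>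
    integrable_mul_comp_eval_pi hF hF hFF i j]
  simp_rw [integral_finsetSum _ fun j _ => integrable_mul_comp_eval_pi hF hF hFF _ j,
    integral_mul_comp_eval_pi]
  rw [Fintype.sum_sum_ite_eq]
  ring

end Pi

end MeasureTheory

instance isProbabilityMeasure_stdGaussian (n : ℕ) : IsProbabilityMeasure (stdGaussian n) := by
  unfold _root_.stdGaussian
  infer_instance

section StdGaussian

variable {n : ℕ}

lemma integral_mul_stdGaussian (a b : Fin n) :
    ∫ x, x a * x b ∂stdGaussian n = if a = b then 1 else 0 := by
  rw [_root_.stdGaussian, integral_mul_comp_eval_pi (fun t => t) (fun t => t)]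
  simp [← sq, integral_sq_gaussianReal]

lemma integrable_mul_stdGaussian (a b : Fin n) :
    Integrable (fun x => x a * x b) (stdGaussian n) := by
  rw [_root_.stdGaussian]
  simpa using integrable_mul_comp_eval_pi (integrable_pow_gaussianReal 0 1 1)
    (integrable_pow_gaussianReal 0 1 1) (by simpa [← sq] using integrable_pow_gaussianReal 0 1 2) a b

lemma sq_mul_mul_eq_prod_pow (a b c : Fin n) (x : Fin n → ℝ) :
    x a ^ 2 * (x b * x c) = ∏ d, x d ^
      ((if a = d then 2 else 0) + (if b = d then 1 else 0) + (if c = d then 1 else 0)) := by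
  simp only [pow_add, prod_mul_distrib, pow_ite, pow_zero, pow_one, prod_ite_eq, mem_univ,
    if_true]
  ring

lemma integrable_sq_mul_mul_stdGaussian (a b c : Fin n) :
    Integrable (fun x => x a ^ 2 * (x b * x c)) (stdGaussian n) := by
  simp_rw [sq_mul_mul_eq_prod_pow a b c]
  exact Integrable.fintype_prod fun d => integrable_pow_gaussianReal 0 1 _

lemma integral_sq_mul_mul_stdGaussian (a b c : Fin n) :
    ∫ x, x a ^ 2 * (x b * x c) ∂stdGaussian n
      = (if b = c then 1 else 0) + if a = b ∧ a = c then 2 else 0 := by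
  by_cases hbc : b = c
  · subst hbc
    simp_rw [← sq]
    rw [_root_.stdGaussian, integral_mul_comp_eval_pi (fun t => t ^ 2) (fun t => t ^ 2)]
    rcases eq_or_ne a b with rfl | hab
    · simp only [↓reduceIte, ← pow_add, integral_pow_four_gaussianReal, NNReal.coe_one, and_self]
      norm_num
    · simp [hab, integral_sq_gaussianReal]
  · -- the variable among `b`, `c` that differs from `a` occurs to the first power
    set d := if a = b then c else b
    have hd : (if a = d then 2 else 0) + (if b = d then 1 else 0) + (if c = d then 1 else 0)
        = 1 := by
      by_cases hab : a = b <;> simp [d, hab, hbc, Ne.symm hbc]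
    rw [_root_.stdGaussian]
    simp_rw [sq_mul_mul_eq_prod_pow a b c]
    rw [integral_fintype_prod_eq_prod (fun d y => y ^ ((if a = d then 2 else 0)
      + (if b = d then 1 else 0) + (if c = d then 1 else 0))),
      prod_eq_zero (mem_univ d) (by simp only [hd, pow_one, integral_id_gaussianReal])]
    rw [if_neg hbc, if_neg fun h => hbc (h.1.symm.trans h.2)]
    norm_num

end StdGaussian

section DotProduct

variable {n : ℕ} (g : Fin n → ℝ) (a : Fin n)

lemma integrable_mul_dotProduct_stdGaussian :
    Integrable (fun x => x a * (x ⬝ᵥ g)) (stdGaussian n) := by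
  simp_rw [dotProduct, mul_sum, ← mul_assoc]
  exact integrable_finsetSum _ fun b _ => (integrable_mul_stdGaussian a b).mul_const _

lemma integral_mul_dotProduct_stdGaussian :
    ∫ x, x a * (x ⬝ᵥ g) ∂stdGaussian n = g a := by
  simp_rw [dotProduct, mul_sum, ← mul_assoc]
  rw [integral_finsetSum _ fun b _ => (integrable_mul_stdGaussian a b).mul_const _]
  simp [integral_mul_const, integral_mul_stdGaussian]

lemma sq_mul_dotProduct_eq_sum (x : Fin n → ℝ) :
    (x a * (x ⬝ᵥ g)) ^ 2 = ∑ b, ∑ c, g b * g c * (x a ^ 2 * (x b * x c)) := by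
  simp_rw [dotProduct, mul_sum, sq, sum_mul_sum]
  exact sum_congr rfl fun b _ => sum_congr rfl fun c _ => by ring

lemma integrable_sq_mul_dotProduct_stdGaussian :
    Integrable (fun x => (x a * (x ⬝ᵥ g)) ^ 2) (stdGaussian n) := by
  simp_rw [sq_mul_dotProduct_eq_sum]
  exact integrable_finsetSum _ fun b _ => integrable_finsetSum _ fun c _ =>
    (integrable_sq_mul_mul_stdGaussian a b c).const_mul _

lemma integral_sq_mul_dotProduct_stdGaussian :
    ∫ x, (x a * (x ⬝ᵥ g)) ^ 2 ∂stdGaussian n = ∑ b, g b ^ 2 + 2 * g a ^ 2 := by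
  simp_rw [sq_mul_dotProduct_eq_sum]
  rw [integral_finsetSum _ fun b _ => integrable_finsetSum _ fun c _ =>
    (integrable_sq_mul_mul_stdGaussian a b c).const_mul _]
  simp_rw [integral_finsetSum _ fun c _ => (integrable_sq_mul_mul_stdGaussian a _ c).const_mul _,
    integral_const_mul, integral_sq_mul_mul_stdGaussian]
  simp only [ite_and, mul_add, mul_ite, mul_one, mul_zero, sum_add_distrib, sum_ite_eq, mem_univ,
    ↓reduceIte, sum_ite_irrel, sum_const_zero, sq, add_right_inj]
  ring

end DotProduct

lemma basisMat_mul_transpose_mulVec {k n : ℕ} (z : Fin k → Fin n → ℝ) (g : Fin n → ℝ)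
    (a : Fin n) : (basisMat z * (basisMat z)ᵀ).mulVec g a = ∑ i, z i a * (z i ⬝ᵥ g) := by
  simp only [mulVec, dotProduct, mul_apply, basisMat, transpose_apply, of_apply, sum_mul,
    mul_sum, mul_assoc]
  exact sum_comm

/-- For fixed `g ∈ ℝⁿ` and `B = [z₁, …, z_k]` with i.i.d. `N(0, I_n)` columns,
`E[‖BBᵀg‖²] = k(n+k+1)‖g‖²`. -/
theorem expectation_normSq_BBtg (k n : ℕ) (g : Fin n → ℝ) :
    ∫ z, (∑ a, ((basisMat z * (basisMat z)ᵀ).mulVec g a) ^ 2) ∂(stdGaussianVecs k n)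
      = (k : ℝ) * ((n : ℝ) + (k : ℝ) + 1) * ∑ a, g a ^ 2 := by
  simp_rw [basisMat_mul_transpose_mulVec]
  rw [stdGaussianVecs, integral_finsetSum _ fun a _ => integrable_sq_sum_comp_eval_pi
    (integrable_mul_dotProduct_stdGaussian g a) (integrable_sq_mul_dotProduct_stdGaussian g a)]
  simp_rw [integral_sq_sum_comp_eval_pi (integrable_mul_dotProduct_stdGaussian g _)
    (integrable_sq_mul_dotProduct_stdGaussian g _), integral_sq_mul_dotProduct_stdGaussian,
    integral_mul_dotProduct_stdGaussian]
  simp only [sum_add_distrib, ← mul_sum, sum_const, card_univ, Fintype.card_fin, nsmul_eq_mul]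
  ring
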